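/- In two variables, let G_k = grad(P_{k+1}) ⊆ (P_k)^2 and let G_k^⊥ be the orthogonal complement of G_k in (P_k)^2 with respect to the L^2(E) inner product on a polygon E. Then the scalar rot operator restricted to G_k^⊥ is a linear isomorphism onto P_{k-1}; in particular dim G_k^⊥ = dim P_{k-1} = k(k+1)/2. -/

import Mathlib

/-!
A polynomial field with vanishing rot is the gradient of an explicit antiderivative, one degree
higher, so its kernel on `(P_k)²` is exactly `G_k`. The `L²(E)` form is definite on polynomial
fields, since a polynomial vanishing on the open set `interior E` is zero; hence an element of
`G_k^⊥` with rot zero lies in `G_k ∩ G_k^⊥ = 0`. For surjectivity, the field `(0, ∫₀ˣ q dt)` has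
rot `q`, and subtracting its projection onto the finite-dimensional `G_k` does not change the rot.
So rot maps `G_k^⊥` bijectively onto `P_{k-1}`, whose dimension counts the monomials `xᵃ yᵇ` with
`a + b < k`.
-/

open MvPolynomial MeasureTheory

/-- `degLE n p` means `p ∈ P_n`, with the convention `P_n = {0}` for `n < 0`. -/
def degLE (n : ℤ) (p : MvPolynomial (Fin 2) ℝ) : Prop :=
  if 0 ≤ n then p.totalDegree ≤ n.toNat else p = 0

/-- The `L²(E)` inner product against a fixed polynomial vector field `g`,
as a linear functional `v ↦ ∫_E v · g`. -/
noncomputable def ipL (E : Set (Fin 2 → ℝ)) (hEb : Bornology.IsBounded E)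
    (g : Fin 2 → MvPolynomial (Fin 2) ℝ) :
    (Fin 2 → MvPolynomial (Fin 2) ℝ) →ₗ[ℝ] ℝ where
  toFun v := ∫ x in E, ∑ i, eval x (v i) * eval x (g i)
  map_add' v w := by
    have h : ∀ u : Fin 2 → MvPolynomial (Fin 2) ℝ,
        IntegrableOn (fun x => ∑ i, eval x (u i) * eval x (g i)) E volume := by
      intro u
      have hc : Continuous fun x : Fin 2 → ℝ => ∑ i, eval x (u i) * eval x (g i) :=
        continuous_finset_sum _ fun i _ =>
          (MvPolynomial.continuous_eval (u i)).mul (MvPolynomial.continuous_eval (g i))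
      exact ((hc.continuousOn).integrableOn_compact hEb.isCompact_closure).mono_set
        subset_closure
    have heq : (fun x => ∑ i, eval x ((v + w) i) * eval x (g i)) =
        fun x => (∑ i, eval x (v i) * eval x (g i)) + ∑ i, eval x (w i) * eval x (g i) := by
      funext x
      simp [add_mul, Finset.sum_add_distrib]
    show (∫ x in E, ∑ i, eval x ((v + w) i) * eval x (g i)) = _
    rw [heq]
    exact integral_add (h v) (h w)
  map_smul' c v := by
    have heq : (fun x => ∑ i, eval x ((c • v) i) * eval x (g i)) =
        fun x => c • ∑ i, eval x (v i) * eval x (g i) := by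
      funext x
      simp [MvPolynomial.smul_eval, mul_assoc]
      ring
    show (∫ x in E, ∑ i, eval x ((c • v) i) * eval x (g i)) = _
    rw [heq, integral_smul]
    rfl

/-- `(P_k)²`, the vector polynomials of degree at most `k` in two variables. -/
noncomputable def Pvec (k : ℕ) : Submodule ℝ (Fin 2 → MvPolynomial (Fin 2) ℝ) :=
  Submodule.pi Set.univ fun _ => MvPolynomial.restrictTotalDegree (Fin 2) ℝ k

/-- `G_k^⊥`: the `L²(E)`-orthogonal complement of `G_k = grad (P_{k+1})` inside `(P_k)²`. -/
noncomputable def Gperp (E : Set (Fin 2 → ℝ)) (hEb : Bornology.IsBounded E) (k : ℕ) :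
    Submodule ℝ (Fin 2 → MvPolynomial (Fin 2) ℝ) :=
  Pvec k ⊓ ⨅ p ∈ {p : MvPolynomial (Fin 2) ℝ | p.totalDegree ≤ k + 1},
    LinearMap.ker (ipL E hEb fun i => pderiv i p)

/-- The scalar rot `rot (v₁, v₂) = ∂v₂/∂x − ∂v₁/∂y`, as a linear map. -/
noncomputable def rotLM :
    (Fin 2 → MvPolynomial (Fin 2) ℝ) →ₗ[ℝ] MvPolynomial (Fin 2) ℝ :=
  LinearMap.comp (pderiv (0 : Fin 2)).toLinearMap
      (LinearMap.proj (φ := fun _ : Fin 2 => MvPolynomial (Fin 2) ℝ) (R := ℝ) 1) -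
    LinearMap.comp (pderiv (1 : Fin 2)).toLinearMap
      (LinearMap.proj (φ := fun _ : Fin 2 => MvPolynomial (Fin 2) ℝ) (R := ℝ) 0)

namespace MvPolynomial

section Degree

variable {σ R : Type*} [CommSemiring R]

theorem pderiv_comm (i j : σ) (p : MvPolynomial σ R) :
    pderiv i (pderiv j p) = pderiv j (pderiv i p) := by
  classical
  suffices (pderiv i).toLinearMap ∘ₗ (pderiv j).toLinearMap =
      (pderiv j).toLinearMap ∘ₗ (pderiv i).toLinearMap from congr($this p)
  refine linearMap_ext fun d => LinearMap.ext_ring ?_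
  rcases eq_or_ne i j with rfl | hij
  · rfl
  simp [pderiv_monomial, hij, Ne.symm hij, tsub_right_comm, mul_comm]

theorem degree_lt_totalDegree_of_mem_support_pderiv {i : σ} {p : MvPolynomial σ R}
    {d : σ →₀ ℕ} (hd : d ∈ (pderiv i p).support) : d.degree < p.totalDegree := by
  classical
  rw [mem_support_iff, coeff_pderiv] at hd
  have : (d + Finsupp.single i 1).degree ≤ p.totalDegree :=
    le_totalDegree (mem_support_iff.mpr (left_ne_zero_of_mul hd))
  rw [map_add, Finsupp.degree_single] at this
  omega

theorem totalDegree_pderiv_le (i : σ) (p : MvPolynomial σ R) :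
    (pderiv i p).totalDegree ≤ p.totalDegree - 1 :=
  Finset.sup_le fun _ hd => Nat.le_sub_one_of_lt (degree_lt_totalDegree_of_mem_support_pderiv hd)

theorem totalDegree_monomial_add_single_le (d : σ →₀ ℕ) (i : σ) (c : R) :
    (monomial (d + Finsupp.single i 1) c).totalDegree ≤ d.degree + 1 :=
  (totalDegree_monomial_le _ _).trans_eq
    ((map_add Finsupp.degree d _).trans (congrArg _ (Finsupp.degree_single i 1)))

theorem totalDegree_linearMap_le (L : MvPolynomial σ R →ₗ[R] MvPolynomial σ R) {b : ℕ}
    (h : ∀ d c, (L (monomial d c)).totalDegree ≤ d.degree + b) (p : MvPolynomial σ R) :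
    (L p).totalDegree ≤ p.totalDegree + b := by
  conv_lhs => rw [p.as_sum, map_sum]
  exact totalDegree_finsetSum_le fun d hd =>
    (h d _).trans (Nat.add_le_add_right (le_totalDegree hd) b)

end Degree

section Antiderivative

variable {σ K : Type*} [Field K]

noncomputable def antideriv (i : σ) : MvPolynomial σ K →ₗ[K] MvPolynomial σ K :=
  (basisMonomials σ K).constr K fun d => monomial (d + Finsupp.single i 1) ((d i + 1 : K)⁻¹)

theorem antideriv_monomial (i : σ) (d : σ →₀ ℕ) (c : K) :
    antideriv i (monomial d c) = monomial (d + Finsupp.single i 1) (c / (d i + 1)) := by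
  have h := (basisMonomials σ K).constr_basis K
    (fun d => monomial (d + Finsupp.single i 1) ((d i + 1 : K)⁻¹)) d
  rw [coe_basisMonomials] at h
  calc antideriv i (monomial d c) = c • antideriv i (monomial d 1) := by
        rw [← map_smul, smul_monomial, smul_eq_mul, mul_one]
    _ = _ := by rw [antideriv, h, smul_monomial, smul_eq_mul, div_eq_mul_inv]

theorem pderiv_antideriv [CharZero K] (i : σ) (p : MvPolynomial σ K) :
    pderiv i (antideriv i p) = p := by
  classical
  suffices (pderiv i).toLinearMap ∘ₗ antideriv i = LinearMap.id from congr($this p)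
  refine linearMap_ext fun d => LinearMap.ext_ring ?_
  simp [antideriv_monomial, pderiv_monomial, Nat.cast_add_one_ne_zero]

theorem pderiv_antideriv_of_ne {i j : σ} (hij : j ≠ i) (p : MvPolynomial σ K) :
    pderiv j (antideriv i p) = antideriv i (pderiv j p) := by
  classical
  suffices (pderiv j).toLinearMap ∘ₗ antideriv i = antideriv i ∘ₗ (pderiv j).toLinearMap from
    congr($this p)
  refine linearMap_ext fun d => LinearMap.ext_ring ?_
  have hsub : d + Finsupp.single i 1 - Finsupp.single j 1 =
      d - Finsupp.single j 1 + Finsupp.single i 1 := by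
    ext a
    rcases eq_or_ne a i with rfl | hai
    · simp [hij]
    · simp [Finsupp.single_apply, Ne.symm hai]
  simp [antideriv_monomial, pderiv_monomial, hsub, hij, Ne.symm hij, div_eq_inv_mul]

theorem totalDegree_antideriv_le (i : σ) (p : MvPolynomial σ K) :
    (antideriv i p).totalDegree ≤ p.totalDegree + 1 :=
  totalDegree_linearMap_le (antideriv i)
    (fun d c => (antideriv_monomial i d c).symm ▸ totalDegree_monomial_add_single_le d i _) p

variable [DecidableEq σ]

noncomputable def setVarZero (i : σ) : MvPolynomial σ K →ₐ[K] MvPolynomial σ K :=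
  aeval (Function.update X i 0)

theorem setVarZero_monomial (i : σ) (d : σ →₀ ℕ) (c : K) :
    setVarZero i (monomial d c) = if d i = 0 then monomial d c else 0 := by
  rw [setVarZero, aeval_monomial, monomial_eq, Finsupp.prod, Finsupp.prod]
  split_ifs with h
  · congr 1
    refine Finset.prod_congr rfl fun j hj => ?_
    rw [Function.update_of_ne]
    rintro rfl
    exact Finsupp.mem_support_iff.mp hj h
  · rw [Finset.prod_eq_zero (Finsupp.mem_support_iff.mpr h) (by simp [h]), mul_zero]

theorem pderiv_setVarZero (i : σ) (p : MvPolynomial σ K) : pderiv i (setVarZero i p) = 0 := by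
  suffices (pderiv i).toLinearMap ∘ₗ (setVarZero i).toLinearMap = 0 from congr($this p)
  refine linearMap_ext fun d => LinearMap.ext_ring ?_
  simp only [LinearMap.comp_apply, AlgHom.toLinearMap_apply, setVarZero_monomial]
  split_ifs with h <;> simp [pderiv_monomial, h]

theorem antideriv_pderiv [CharZero K] (i : σ) (p : MvPolynomial σ K) :
    antideriv i (pderiv i p) = p - setVarZero i p := by
  suffices antideriv i ∘ₗ (pderiv i).toLinearMap = LinearMap.id - (setVarZero i).toLinearMap from
    congr($this p)
  refine linearMap_ext fun d => LinearMap.ext_ring ?_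
  simp only [LinearMap.comp_apply, LinearMap.sub_apply, AlgHom.toLinearMap_apply,
    setVarZero_monomial]
  split_ifs with h
  · simp [pderiv_monomial, h]
  · have hle : Finsupp.single i 1 ≤ d := Finsupp.single_le_iff.mpr (Nat.one_le_iff_ne_zero.mpr h)
    have hd : (d i - 1 : ℕ) + 1 = (d i : K) := by
      rw [← Nat.cast_add_one, Nat.sub_add_cancel (Nat.one_le_iff_ne_zero.mpr h)]
    simp [pderiv_monomial, antideriv_monomial, tsub_add_cancel_of_le hle, hd, h]

theorem totalDegree_setVarZero_le (i : σ) (p : MvPolynomial σ K) :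
    (setVarZero i p).totalDegree ≤ p.totalDegree :=
  totalDegree_linearMap_le (setVarZero i).toLinearMap (b := 0) (fun d c => by
    rw [AlgHom.toLinearMap_apply, setVarZero_monomial]
    split_ifs
    · exact totalDegree_monomial_le _ _
    · simp) p

end Antiderivative

noncomputable def grad {σ R : Type*} [CommSemiring R] :
    MvPolynomial σ R →ₗ[R] σ → MvPolynomial σ R :=
  LinearMap.pi fun i => (pderiv i).toLinearMap

@[simp]
theorem grad_apply {σ R : Type*} [CommSemiring R] (p : MvPolynomial σ R) (i : σ) :
    grad p i = pderiv i p :=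
  rfl

theorem eq_zero_of_forall_eval_eq_zero_of_isOpen {σ : Type*} [Fintype σ]
    {p : MvPolynomial σ ℝ} {U : Set (σ → ℝ)} (hU : IsOpen U) (hne : U.Nonempty)
    (hp : ∀ x ∈ U, eval x p = 0) : p = 0 := by
  obtain ⟨x₀, hx₀⟩ := hne
  have h := (AnalyticOnNhd.eval_mvPolynomial p).eq_of_eventuallyEq
    (analyticOnNhd_const (v := (0 : ℝ))) (Filter.eventuallyEq_of_mem (hU.mem_nhds hx₀) hp)
  exact MvPolynomial.funext fun x => by simpa using congrFun h x

end MvPolynomial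

theorem LinearMap.BilinForm.exists_mem_sub_mem_orthogonal {K V : Type*} [Field K]
    [AddCommGroup V] [Module K V] {B : LinearMap.BilinForm K V} {W : Submodule K V}
    [FiniteDimensional K W] (hW : (B.restrict W).Nondegenerate) (v : V) :
    ∃ w ∈ W, v - w ∈ B.orthogonal W := by
  let w : W := ((B.restrict W).flip.toDual hW.flip).symm ((B.flip v).domRestrict W)
  refine ⟨w, w.2, fun n hn => ?_⟩
  have hw : B n w = B n v := apply_toDual_symm_apply (B := (B.restrict W).flip) _ ⟨n, hn⟩
  rw [map_sub, hw, sub_self]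

theorem LinearMap.finrank_eq_of_bijOn {K V W : Type*} [Field K] [AddCommGroup V] [Module K V]
    [AddCommGroup W] [Module K W] (f : V →ₗ[K] W) {p : Submodule K V} {q : Submodule K W}
    (h : Set.BijOn f p q) : Module.finrank K p = Module.finrank K q := by
  refine (LinearEquiv.ofBijective (f.restrict fun _ hx => h.mapsTo hx) ⟨?_, ?_⟩).finrank_eq
  · exact fun x y hxy => Subtype.ext (h.injOn x.2 y.2 (congrArg Subtype.val hxy))
  · rintro ⟨y, hy⟩
    obtain ⟨x, hx, rfl⟩ := h.surjOn hy
    exact ⟨⟨x, hx⟩, rfl⟩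

theorem rotLM_apply (v : Fin 2 → MvPolynomial (Fin 2) ℝ) :
    rotLM v = pderiv 0 (v 1) - pderiv 1 (v 0) :=
  rfl

theorem rotLM_grad (p : MvPolynomial (Fin 2) ℝ) : rotLM (grad p) = 0 := by
  rw [rotLM_apply, grad_apply, grad_apply, pderiv_comm, sub_self]

theorem mem_Pvec {k : ℕ} {v : Fin 2 → MvPolynomial (Fin 2) ℝ} :
    v ∈ Pvec k ↔ ∀ i, (v i).totalDegree ≤ k := by
  simp [Pvec, Submodule.mem_pi, mem_restrictTotalDegree]

noncomputable def gradSubmodule (k : ℕ) : Submodule ℝ (Fin 2 → MvPolynomial (Fin 2) ℝ) :=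
  (restrictTotalDegree (Fin 2) ℝ (k + 1)).map grad

instance (k : ℕ) : FiniteDimensional ℝ (gradSubmodule k) :=
  Module.Finite.map _ _

theorem gradSubmodule_le_Pvec (k : ℕ) : gradSubmodule k ≤ Pvec k := by
  rintro _ ⟨p, hp, rfl⟩
  refine mem_Pvec.2 fun i => (totalDegree_pderiv_le i p).trans ?_
  have := (mem_restrictTotalDegree _ _ _).1 hp
  omega

-- `p(x, y) = ∫₀ˣ v₀(t, y) dt + ∫₀ʸ v₁(0, s) ds`
theorem mem_gradSubmodule_of_rotLM_eq_zero {k : ℕ} {v : Fin 2 → MvPolynomial (Fin 2) ℝ}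
    (hv : v ∈ Pvec k) (hrot : rotLM v = 0) : v ∈ gradSubmodule k := by
  rw [rotLM_apply, sub_eq_zero] at hrot
  have hdeg := mem_Pvec.1 hv
  refine ⟨antideriv 0 (v 0) + antideriv 1 (setVarZero 0 (v 1)), ?_, ?_⟩
  · refine (mem_restrictTotalDegree _ _ _).2 <| (totalDegree_add _ _).trans (max_le ?_ ?_)
    · exact (totalDegree_antideriv_le _ _).trans (by grind)
    · exact (totalDegree_antideriv_le _ _).trans
        (by grind [totalDegree_setVarZero_le 0 (v 1)])
  · funext i
    fin_cases i
    · simp [pderiv_antideriv, pderiv_antideriv_of_ne, pderiv_setVarZero]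
    · simp [pderiv_antideriv, pderiv_antideriv_of_ne, ← hrot, antideriv_pderiv]

/-- `P_{k-1}`, written without the truncated subtraction `k - 1`. -/
noncomputable def Plt (k : ℕ) : Submodule ℝ (MvPolynomial (Fin 2) ℝ) :=
  restrictSupport ℝ {d | d.degree < k}

theorem finrank_Plt (k : ℕ) : Module.finrank ℝ (Plt k) = k * (k + 1) / 2 := by
  classical
  let S : Finset (Fin 2 →₀ ℕ) := (Finset.range k).biUnion (Finset.univ.finsuppAntidiag ·)
  have hS : {d : Fin 2 →₀ ℕ | d.degree < k} = S := by
    ext d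
    simp [S, Finset.mem_finsuppAntidiag, Finsupp.degree_eq_sum]
  have hcard : S.card = ∑ m ∈ Finset.range (k + 1), m := by
    rw [Finset.card_biUnion, Finset.sum_range_succ']
    · simp [Finset.card_finsuppAntidiag_nat_eq_choose, add_comm 1]
    · intro m _ n _ hmn
      refine Finset.disjoint_left.2 fun d hm hn => hmn ?_
      rw [← (Finset.mem_finsuppAntidiag.1 hm).1, (Finset.mem_finsuppAntidiag.1 hn).1]
  rw [Plt, Module.finrank_eq_nat_card_basis (basisRestrictSupport ℝ _), hS, Nat.card_coe_set_eq,
    Set.ncard_coe_finset, hcard, Finset.sum_range_id, Nat.add_sub_cancel, mul_comm]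

theorem degLE_natCast_sub_one_iff {k : ℕ} {q : MvPolynomial (Fin 2) ℝ} :
    degLE ((k : ℤ) - 1) q ↔ q ∈ Plt k := by
  rw [Plt, mem_restrictSupport_iff, degLE]
  rcases k with _ | k
  · simp [Finset.coe_eq_empty]
  · rw [if_pos (by omega), show ((k + 1 : ℕ) - 1 : ℤ).toNat = k by omega, totalDegree,
      Finset.sup_le_iff]
    exact ⟨fun h d hd => Nat.lt_succ_of_le (h d hd), fun h d hd => Nat.le_of_lt_succ (h hd)⟩

theorem pderiv_mem_Plt {k : ℕ} (i : Fin 2) {p : MvPolynomial (Fin 2) ℝ}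
    (hp : p.totalDegree ≤ k) : pderiv i p ∈ Plt k :=
  fun _ hd => (degree_lt_totalDegree_of_mem_support_pderiv hd).trans_le hp

theorem rotLM_mem_Plt {k : ℕ} {v : Fin 2 → MvPolynomial (Fin 2) ℝ} (hv : v ∈ Pvec k) :
    rotLM v ∈ Plt k :=
  sub_mem (pderiv_mem_Plt 0 (mem_Pvec.1 hv 1)) (pderiv_mem_Plt 1 (mem_Pvec.1 hv 0))

theorem antideriv_mem_restrictTotalDegree {k : ℕ} (i : Fin 2) {q : MvPolynomial (Fin 2) ℝ}
    (hq : q ∈ Plt k) : antideriv i q ∈ restrictTotalDegree (Fin 2) ℝ k := by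
  rw [q.as_sum, map_sum]
  refine Submodule.sum_mem _ fun d hd => ?_
  rw [antideriv_monomial, mem_restrictTotalDegree]
  exact (totalDegree_monomial_add_single_le d i _).trans (hq hd)

section L2

variable (E : Set (Fin 2 → ℝ)) (hEb : Bornology.IsBounded E)

theorem ipL_apply (g v : Fin 2 → MvPolynomial (Fin 2) ℝ) :
    ipL E hEb g v = ∫ x in E, ∑ i, eval x (v i) * eval x (g i) :=
  rfl

theorem ipL_comm (g v : Fin 2 → MvPolynomial (Fin 2) ℝ) : ipL E hEb g v = ipL E hEb v g := by
  simp only [ipL_apply, mul_comm]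

noncomputable def l2Form : LinearMap.BilinForm ℝ (Fin 2 → MvPolynomial (Fin 2) ℝ) :=
  LinearMap.mk₂ ℝ (fun g v => ipL E hEb g v)
    (fun g g' v => by simp only [ipL_comm E hEb _ v, map_add])
    (fun c g v => by simp only [ipL_comm E hEb _ v, map_smul, smul_eq_mul])
    (fun g v v' => map_add _ v v')
    (fun c g v => map_smul _ c v)

theorem l2Form_apply (g v : Fin 2 → MvPolynomial (Fin 2) ℝ) :
    l2Form E hEb g v = ipL E hEb g v :=
  rfl

theorem Gperp_eq (k : ℕ) :
    Gperp E hEb k = Pvec k ⊓ (l2Form E hEb).orthogonal (gradSubmodule k) := by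
  ext v
  simp only [Gperp, Set.mem_ofPred_eq, Submodule.mem_inf, Submodule.mem_iInf, LinearMap.mem_ker,
    gradSubmodule, LinearMap.BilinForm.mem_orthogonal_iff, Submodule.mem_map,
    mem_restrictTotalDegree, l2Form_apply, forall_exists_index, and_imp,
    forall_apply_eq_imp_iff₂, and_congr_right_iff]
  exact fun _ => Iff.rfl

theorem Gperp_le_Pvec (k : ℕ) :
    Gperp E hEb k ≤ Pvec k :=
  inf_le_left

end L2

theorem eq_zero_of_ipL_self_eq_zero {E : Set (Fin 2 → ℝ)} (hEb : Bornology.IsBounded E)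
    (hEi : (interior E).Nonempty) {v : Fin 2 → MvPolynomial (Fin 2) ℝ}
    (h : ipL E hEb v v = 0) : v = 0 := by
  set f := fun x : Fin 2 → ℝ => ∑ i, eval x (v i) * eval x (v i)
  have hcont : Continuous f :=
    continuous_finsetSum _ fun i _ => (continuous_eval _).mul (continuous_eval _)
  have hnn : 0 ≤ f := fun x => Finset.sum_nonneg fun i _ => mul_self_nonneg _
  have hint : IntegrableOn f E :=
    (hcont.continuousOn.integrableOn_compact hEb.isCompact_closure).mono_set subset_closure
  have hae : f =ᵐ[volume.restrict (interior E)] 0 :=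
    ae_restrict_of_ae_restrict_of_subset interior_subset
      ((integral_eq_zero_iff_of_nonneg hnn hint).1 h)
  have hf : Set.EqOn f 0 (interior E) :=
    Measure.eqOn_open_of_ae_eq hae isOpen_interior hcont.continuousOn continuousOn_const
  funext i
  refine eq_zero_of_forall_eval_eq_zero_of_isOpen isOpen_interior hEi fun x hx => ?_
  have := (Finset.sum_eq_zero_iff_of_nonneg fun j _ => mul_self_nonneg (eval x (v j))).1 (hf hx) i
    (Finset.mem_univ i)
  exact mul_self_eq_zero.1 this

section Gperp

variable {E : Set (Fin 2 → ℝ)} (hEb : Bornology.IsBounded E) (k : ℕ)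

theorem injOn_rotLM_Gperp (hEi : (interior E).Nonempty) :
    Set.InjOn rotLM (Gperp E hEb k) := by
  intro v hv w hw h
  have hsub : v - w ∈ Gperp E hEb k := sub_mem hv hw
  rw [Gperp_eq] at hsub
  have hgrad := mem_gradSubmodule_of_rotLM_eq_zero hsub.1 (by rw [map_sub, h, sub_self])
  exact sub_eq_zero.1 (eq_zero_of_ipL_self_eq_zero hEb hEi (hsub.2 _ hgrad))

theorem surjOn_rotLM_Gperp (hEi : (interior E).Nonempty) :
    Set.SurjOn rotLM (Gperp E hEb k) (Plt k) := by
  intro q hq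
  set w : Fin 2 → MvPolynomial (Fin 2) ℝ := Pi.single 1 (antideriv 0 q)
  have hw : w ∈ Pvec k := by
    refine Submodule.mem_pi.2 fun i _ => ?_
    fin_cases i
    · exact zero_mem _
    · exact antideriv_mem_restrictTotalDegree 0 hq
  have hrot : rotLM w = q := by simp [rotLM_apply, w, pderiv_antideriv]
  have hnd : ((l2Form E hEb).restrict (gradSubmodule k)).Nondegenerate :=
    ⟨fun g hg => Subtype.ext (eq_zero_of_ipL_self_eq_zero hEb hEi (hg g)),
      fun g hg => Subtype.ext (eq_zero_of_ipL_self_eq_zero hEb hEi (hg g))⟩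
  obtain ⟨g, hg, hz⟩ := (l2Form E hEb).exists_mem_sub_mem_orthogonal hnd w
  refine ⟨w - g, Gperp_eq E hEb k ▸ ⟨sub_mem hw (gradSubmodule_le_Pvec k hg), hz⟩, ?_⟩
  obtain ⟨p, -, rfl⟩ := hg
  rw [map_sub, hrot, rotLM_grad, sub_zero]

theorem bijOn_rotLM_Gperp (hEi : (interior E).Nonempty) :
    Set.BijOn rotLM (Gperp E hEb k) (Plt k) :=
  ⟨fun _ hv => rotLM_mem_Plt (Gperp_le_Pvec E hEb k hv), injOn_rotLM_Gperp hEb k hEi,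
    surjOn_rotLM_Gperp hEb k hEi⟩

end Gperp

theorem rot_iso_on_Gperp_general (k : ℕ) (E : Set (Fin 2 → ℝ))
    (hEb : Bornology.IsBounded E) (hEi : (interior E).Nonempty) :
    (∀ v ∈ Gperp E hEb k, ∀ w ∈ Gperp E hEb k, rotLM v = rotLM w → v = w) ∧
    (∀ v ∈ Gperp E hEb k, degLE ((k : ℤ) - 1) (rotLM v)) ∧
    (∀ q : MvPolynomial (Fin 2) ℝ, degLE ((k : ℤ) - 1) q →
      ∃ v ∈ Gperp E hEb k, rotLM v = q) ∧
    Module.finrank ℝ (Gperp E hEb k) = k * (k + 1) / 2 := by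
  have h := bijOn_rotLM_Gperp hEb k hEi
  refine ⟨fun v hv w hw => h.injOn hv hw, fun v hv => degLE_natCast_sub_one_iff.2 (h.mapsTo hv),
    fun q hq => h.surjOn (degLE_natCast_sub_one_iff.1 hq), ?_⟩
  rw [rotLM.finrank_eq_of_bijOn h, finrank_Plt]

/-- For a bounded polygon `E` (with nonempty interior), the scalar rot restricted to the
`L²(E)`-orthogonal complement `G_k^⊥` of `G_k = grad(P_{k+1})` in `(P_k)²` is a linear
isomorphism onto `P_{k-1}`; in particular `dim G_k^⊥ = dim P_{k-1} = k(k+1)/2`. -/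
theorem rot_iso_on_Gperp (k : ℕ) (E : Set (Fin 2 → ℝ)) (hEm : MeasurableSet E)
    (hEb : Bornology.IsBounded E) (hEi : (interior E).Nonempty) :
    (∀ v ∈ Gperp E hEb k, ∀ w ∈ Gperp E hEb k, rotLM v = rotLM w → v = w) ∧
    (∀ v ∈ Gperp E hEb k, degLE ((k : ℤ) - 1) (rotLM v)) ∧
    (∀ q : MvPolynomial (Fin 2) ℝ, degLE ((k : ℤ) - 1) q →
      ∃ v ∈ Gperp E hEb k, rotLM v = q) ∧
    Module.finrank ℝ (Gperp E hEb k) = k * (k + 1) / 2 :=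
  rot_iso_on_Gperp_general k E hEb hEi
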